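/- Let q > 1 and for integers k, d, ω with fixed s ∈ ℂ, define φ^s(k,d,ω) = q^{(k-2d)s} if ω ≥ k - d and q^{(2ω-k)s} if ω < k - d; define ψ^s(k,d,ω) = -q^{(k-1-2d)s} if ω ≥ k - d and q^{(2ω-k)s} if ω < k - d. Then for all k, d, ω: φ^s(k-1,d,ω) - φ^s(k,d,ω) = (q^s - 1)·ψ^s(k,d,ω). -/
import Mathlib

lemma cpow_succ_mul (q : ℝ) (hq : 1 < q) (s : ℂ) (a : ℤ) :
    (q : ℂ) ^ (((a + 1 : ℤ) : ℂ) * s) = (q : ℂ) ^ s * (q : ℂ) ^ ((a : ℂ) * s) := by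
  have hq0 : (q : ℂ) ≠ 0 := by
    exact_mod_cast ne_of_gt (lt_trans zero_lt_one hq)
  rw [← Complex.cpow_add _ _ hq0]
  congr 1
  push_cast
  ring

/-- Lemma 5.1 of the paper, combinatorially: with
`φ^s(k,d,ω) = q^{(k-2d)s}` if `ω ≥ k-d`, `q^{(2ω-k)s}` otherwise, and
`ψ^s(k,d,ω) = -q^{(k-1-2d)s}` if `ω ≥ k-d`, `q^{(2ω-k)s}` otherwise,
one has `φ^s(k-1,d,ω) - φ^s(k,d,ω) = (q^s - 1)·ψ^s(k,d,ω)` for all integers `k,d,ω`. -/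
theorem eisenstein_local_discrete_derivative (q : ℝ) (hq : 1 < q) (s : ℂ) (k d ω : ℤ) :
    ((if ω ≥ (k - 1) - d then (q : ℂ) ^ ((((k - 1) - 2 * d : ℤ) : ℂ) * s)
        else (q : ℂ) ^ (((2 * ω - (k - 1) : ℤ) : ℂ) * s))
      - (if ω ≥ k - d then (q : ℂ) ^ (((k - 2 * d : ℤ) : ℂ) * s)
        else (q : ℂ) ^ (((2 * ω - k : ℤ) : ℂ) * s)))
    = ((q : ℂ) ^ s - 1) *
      (if ω ≥ k - d then -(q : ℂ) ^ (((k - 1 - 2 * d : ℤ) : ℂ) * s)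
        else (q : ℂ) ^ (((2 * ω - k : ℤ) : ℂ) * s)) := by
  by_cases h1 : ω ≥ k - d
  · have h2 : ω ≥ (k - 1) - d := by omega
    rw [if_pos h1, if_pos h2, if_pos h1]
    have : (k - 2 * d : ℤ) = (k - 1 - 2 * d) + 1 := by ring
    rw [this, cpow_succ_mul q hq]
    have : ((k - 1) - 2 * d : ℤ) = (k - 1 - 2 * d) := by ring
    rw [this]; ring
  · rw [if_neg h1, if_neg h1]
    by_cases h2 : ω ≥ (k - 1) - d
    · have heq : ω = k - 1 - d := by omega
      rw [if_pos h2]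
      have e1 : ((k - 1) - 2 * d : ℤ) = (2 * ω - k) + 1 := by omega
      rw [e1, cpow_succ_mul q hq]; ring
    · rw [if_neg h2]
      have e1 : (2 * ω - (k - 1) : ℤ) = (2 * ω - k) + 1 := by ring
      rw [e1, cpow_succ_mul q hq]; ring
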